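/- arXiv:1711.03272 — 5 statements merged into one kernel-verified Lean document; each statement's English description precedes it below -/
import Mathlib

section
/- In the flow domain of extended naturals ℕ∞ with (≤, max, +, ·, 0, 1), the capacity function of a finite graph, defined as the least fixpoint of cap(n, n') = δ(n,n') + Σ_{n''∈N} ε(n, n'') · cap(n'', n') where δ(n,n') = 1 if n = n' and 0 otherwise, satisfies: if every edge label ε(n,n') is interpreted as the number of edges from n to n', then cap(n, n') equals the number of (possibly length-zero) paths from n to n' in the corresponding multigraph (taking value ∞ when there are infinitely many paths). -/
/-!
Kleene's fixpoint argument. Writing `S_L(n, n')` for the number of paths of length `< L`,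
splitting off the first edge gives `S_{L+1} = δ + ε · S_L`, so `S_L` is the `L`-th Kleene
iterate of the capacity equation from `0`. Since `+` and `·` on `ℕ∞` commute with suprema of
monotone sequences, `numPaths = ⨆ L, S_L` solves the equation, and an induction on `L` shows
that every solution dominates each `S_L`. Hence `numPaths` is the least solution.
-/

variable {V : Type*} [DecidableEq V]

/-- The capacity equation in the flow domain `ℕ∞`: for all nodes `n, n'` of the finite graph
with node set `N` and edge function `ε`,
`cap n n' = δ(n,n') + Σ_{m ∈ N} ε n m * cap m n'`. -/
def CapEqN (N : Finset V) (ε cap : V → V → ℕ∞) : Prop :=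
  ∀ n ∈ N, ∀ n' ∈ N,
    cap n n' = (if n = n' then 1 else 0) + ∑ m ∈ N, ε n m * cap m n'

/-- `cap` is the least fixpoint of the capacity equation (leastness with respect to the
pointwise order of `ℕ∞`). -/
def IsCapN (N : Finset V) (ε cap : V → V → ℕ∞) : Prop :=
  CapEqN N ε cap ∧
    ∀ c, CapEqN N ε c → ∀ n ∈ N, ∀ n' ∈ N, cap n n' ≤ c n n'

/-- `matPow N ε l n n'` is the `(n,n')` entry of the `l`-th power of the adjacency matrix of
the graph; interpreting `ε n m` as the number of edges from `n` to `m`, it is the number of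
paths of length `l` from `n` to `n'` (weighted by edge multiplicities). -/
def matPow (N : Finset V) (ε : V → V → ℕ∞) : ℕ → V → V → ℕ∞
  | 0 => fun n n' => if n = n' then 1 else 0
  | l + 1 => fun n n' => ∑ m ∈ N, ε n m * matPow N ε l m n'

/-- The total number of (possibly length-zero) paths from `n` to `n'` in the multigraph,
taking the value `∞` when there are infinitely many paths. -/
noncomputable def numPaths (N : Finset V) (ε : V → V → ℕ∞) (n n' : V) : ℕ∞ :=
  ⨆ L : ℕ, ∑ l ∈ Finset.range L, matPow N ε l n n'

def numPathsBelow (N : Finset V) (ε : V → V → ℕ∞) (L : ℕ) (n n' : V) : ℕ∞ :=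
  ∑ l ∈ Finset.range L, matPow N ε l n n'

section

variable (N : Finset V) (ε : V → V → ℕ∞)

theorem monotone_numPathsBelow (n n' : V) : Monotone fun L ↦ numPathsBelow N ε L n n' :=
  fun _ _ hLL' ↦ Finset.sum_le_sum_of_subset (Finset.range_subset_range.mpr hLL')

theorem numPathsBelow_succ (L : ℕ) (n n' : V) :
    numPathsBelow N ε (L + 1) n n' =
      (if n = n' then 1 else 0) + ∑ m ∈ N, ε n m * numPathsBelow N ε L m n' := by
  simp only [numPathsBelow, Finset.sum_range_succ', matPow, Finset.mul_sum]
  rw [add_comm, Finset.sum_comm]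

theorem capEqN_numPaths : CapEqN N ε (numPaths N ε) := by
  intro n _ n' _
  have hmono (m : V) := monotone_numPathsBelow N ε m n'
  calc numPaths N ε n n'
      = ⨆ L, numPathsBelow N ε (L + 1) n n' := ((hmono n).iSup_nat_add 1).symm
    _ = ⨆ L, ((if n = n' then 1 else 0) + ∑ m ∈ N, ε n m * numPathsBelow N ε L m n') := by
        simp only [numPathsBelow_succ]
    _ = (if n = n' then 1 else 0) + ⨆ L, ∑ m ∈ N, ε n m * numPathsBelow N ε L m n' :=
        (ENat.add_iSup _).symm
    _ = (if n = n' then 1 else 0) + ∑ m ∈ N, ε n m * numPaths N ε m n' := by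
        rw [← ENat.sum_iSup_of_monotone (f := fun m L ↦ ε n m * numPathsBelow N ε L m n')
          fun m _ _ hLL' ↦ mul_le_mul_right (hmono m hLL') _]
        exact congrArg _ (Finset.sum_congr rfl fun m _ ↦ (ENat.mul_iSup _ _).symm)

theorem numPaths_le_of_prefixedPoint {c : V → V → ℕ∞}
    (hc : ∀ n ∈ N, ∀ n' ∈ N, (if n = n' then 1 else 0) + ∑ m ∈ N, ε n m * c m n' ≤ c n n') :
    ∀ n ∈ N, ∀ n' ∈ N, numPaths N ε n n' ≤ c n n' := by
  suffices ∀ L, ∀ n ∈ N, ∀ n' ∈ N, numPathsBelow N ε L n n' ≤ c n n' from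
    fun n hn n' hn' ↦ iSup_le fun L ↦ this L n hn n' hn'
  intro L
  induction L with
  | zero => simp [numPathsBelow]
  | succ L ih =>
    intro n hn n' hn'
    rw [numPathsBelow_succ]
    refine le_trans ?_ (hc n hn n' hn')
    gcongr with m hm
    exact ih m hm n' hn'

end

/-- in the flow domain of extended naturals, the least-fixpoint capacity of a
finite graph counts paths: if every edge label `ε n m` is interpreted as the number of edges
from `n` to `m`, then `cap n n'` equals the number of (possibly length-zero) paths from `n`
to `n'` in the corresponding multigraph. -/
theorem capacity_counts_paths (N : Finset V) (ε cap : V → V → ℕ∞)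
    (hcap : IsCapN N ε cap) :
    ∀ n ∈ N, ∀ n' ∈ N, cap n n' = numPaths N ε n n' :=
  fun n hn n' hn' ↦ le_antisymm (hcap.2 _ (capEqN_numPaths N ε) n hn n' hn')
    (numPaths_le_of_prefixedPoint N ε (fun m hm m' hm' ↦ (hcap.1 m hm m' hm').ge) n hn n' hn')
end

section
/- In the flow domain (2^K, ⊆, ∪, ∪, ∩, ∅, K) of subsets of a key set K, the capacity function of a finite graph, defined as the least fixpoint of cap(n, n') = δ(n,n') + Σ_{n''∈N} ε(n, n'') · cap(n'', n') where δ(n,n') = K if n = n' and ∅ otherwise, addition is union and multiplication is intersection, satisfies: cap(n, n') is exactly the set of keys k ∈ K for which there exists a path from n to n' (possibly of length zero when n = n') such that k belongs to the label ε(u,v) of every edge (u,v) on the path. -/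
/-!
The pathsets `P n n' = {k | KPath N ε k n n'}` satisfy the capacity equation (split a path into
its first edge and the rest), so leastness gives `cap ⊆ P`. Conversely any solution of the
equation contains every pathset, by induction on the path.
-/

variable {V K : Type*} [DecidableEq V]

/-- The capacity equation in the flow domain `(2^K, ⊆, ∪, ∪, ∩, ∅, K)`: for all nodes `n, n'`
of the finite graph with node set `N` and edgeset function `ε`,
`cap n n' = δ(n,n') ∪ ⋃_{m ∈ N} (ε n m ∩ cap m n')`, where `δ(n,n') = K` if `n = n'` and `∅`
otherwise. -/
def CapEqK (N : Finset V) (ε cap : V → V → Set K) : Prop :=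
  ∀ n ∈ N, ∀ n' ∈ N,
    cap n n' = (if n = n' then Set.univ else ∅) ∪ ⋃ m ∈ N, ε n m ∩ cap m n'

/-- `cap` is the least fixpoint of the capacity equation (leastness with respect to the
pointwise inclusion order). -/
def IsCapK (N : Finset V) (ε cap : V → V → Set K) : Prop :=
  CapEqK N ε cap ∧
    ∀ c, CapEqK N ε c → ∀ n ∈ N, ∀ n' ∈ N, cap n n' ⊆ c n n'

/-- `KPath N ε k n n'` holds iff there is a path from `n` to `n'` (possibly of length zero)
whose intermediate sources lie in `N` and such that `k` belongs to the edgeset label of every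
edge along the path. -/
inductive KPath (N : Finset V) (ε : V → V → Set K) (k : K) : V → V → Prop
  | refl (n : V) : KPath N ε k n n
  | step {n m n' : V} : n ∈ N → k ∈ ε n m → KPath N ε k m n' → KPath N ε k n n'

namespace KPath

variable {N : Finset V} {ε : V → V → Set K} {k : K}

omit [DecidableEq V] in
theorem source_mem {n n' : V} (h : KPath N ε k n n') (hn' : n' ∈ N) : n ∈ N := by
  cases h with
  | refl => exact hn'
  | step hn _ _ => exact hn

theorem mem_of_capEqK {cap : V → V → Set K} (hcap : CapEqK N ε cap) {n n' : V}
    (h : KPath N ε k n n') (hn' : n' ∈ N) : k ∈ cap n n' := by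
  induction h with
  | refl m =>
    rw [hcap m hn' m hn']
    simp
  | @step a m b ha hk hpath ih =>
    rw [hcap a ha b hn']
    exact Or.inr (Set.mem_biUnion (hpath.source_mem hn') ⟨hk, ih hn'⟩)

end KPath

theorem capEqK_kpath (N : Finset V) (ε : V → V → Set K) :
    CapEqK N ε (fun n n' => {k : K | KPath N ε k n n'}) := by
  intro n hn n' hn'
  ext k
  constructor
  · rintro (_ | ⟨-, hk, hpath⟩)
    · simp
    · exact Or.inr (Set.mem_biUnion (hpath.source_mem hn') ⟨hk, hpath⟩)
  · rintro (hδ | hk)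
    · split_ifs at hδ with hnn'
      · exact hnn' ▸ KPath.refl n
      · exact hδ.elim
    · obtain ⟨m, -, hk, hpath⟩ := Set.mem_iUnion₂.mp hk
      exact KPath.step hn hk hpath

/-- in the flow domain of subsets of a key set `K`, the least-fixpoint capacity
`cap n n'` is exactly the set of keys `k` for which there exists a path from `n` to `n'`
(possibly of length zero when `n = n'`) with `k` in the label of every edge on the path. -/
theorem capacity_is_pathsets (N : Finset V) (ε cap : V → V → Set K)
    (hcap : IsCapK N ε cap) :
    ∀ n ∈ N, ∀ n' ∈ N, cap n n' = {k : K | KPath N ε k n n'} := by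
  intro n hn n' hn'
  exact Set.Subset.antisymm (hcap.2 _ (capEqK_kpath N ε) n hn n' hn')
    fun _ hk => hk.mem_of_capEqK hcap.1 hn'
end

section
/- Let G be a graph with edge labels in the flow domain 2^K of sets of keys, with a single root r, inflow in(x) = K if x = r and ∅ otherwise, and flow (inset) flow(n) = ∪_{n'} in(n') ∩ cap(n', n). Define the keyset of a node n as its inset minus the union of edgesets of its outgoing edges: ks(n) = flow(n) \ ∪_{n'} ε(n, n'). If for every node n the edgesets of distinct outgoing edges of n are pairwise disjoint, then the keysets of distinct nodes are pairwise disjoint. -/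
/-!
For a fixed key `k`, the least fixpoint `cap a b` is contained in the set of keys `k` for which
some path from `a` to `b` carries `k` on every edge, and the inset of `n` is `cap r n`. Disjointness
of the outgoing edgesets makes every node have at most one outgoing `k`-edge, so the `k`-paths
leaving the root form a single chain and any two nodes with `k` in their inset lie on it, one
before the other. A node with `k` in its keyset has no outgoing `k`-edge, so it ends the chain;
two such nodes must therefore coincide.
-/

variable {V K : Type*} [DecidableEq V]

/-- The inset (flow) of a node `n` for the single-root inflow `in(x) = K` if `x = r`, `∅`
otherwise: `flow(n) = ⋃_{n' ∈ N} in(n') ∩ cap(n', n)`. -/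
def insetOf (N : Finset V) (r : V) (cap : V → V → Set K) (n : V) : Set K :=
  ⋃ m ∈ N, (if m = r then (Set.univ : Set K) else ∅) ∩ cap m n

/-- The keyset of a node: its inset minus the union of the edgesets of its outgoing edges. -/
def keysetOf (N : Finset V) (r : V) (ε cap : V → V → Set K) (n : V) : Set K :=
  insetOf N r cap n \ ⋃ n' : V, ε n n'

open Relation

/-- The `k`-labelled edges. The condition `a ∈ N` is there because disjointness of outgoing
edgesets is only assumed at nodes of `N`; with it, `keyEdge N ε k` is right-unique. -/
def keyEdge (N : Finset V) (ε : V → V → Set K) (k : K) (a b : V) : Prop :=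
  a ∈ N ∧ b ∈ N ∧ k ∈ ε a b

section

variable {N : Finset V} {ε : V → V → Set K}

theorem capEqK_reflTransGen_keyEdge :
    CapEqK N ε (fun a b => {k | ReflTransGen (keyEdge N ε k) a b}) := by
  intro a ha b _
  ext k
  rw [Set.mem_ofPred_eq, ReflTransGen.cases_head_iff]
  split_ifs with hab <;> simp [keyEdge, ha, hab, and_assoc, and_left_comm]

theorem IsCapK.subset_reflTransGen {cap : V → V → Set K} (hcap : IsCapK N ε cap)
    {a b : V} (ha : a ∈ N) (hb : b ∈ N) :
    cap a b ⊆ {k | ReflTransGen (keyEdge N ε k) a b} :=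
  hcap.2 _ capEqK_reflTransGen_keyEdge a ha b hb

theorem insetOf_eq {r : V} (hr : r ∈ N) (cap : V → V → Set K) (n : V) :
    insetOf N r cap n = cap r n := by
  ext k
  simp only [insetOf, Set.mem_iUnion, Set.mem_inter_iff, exists_prop]
  constructor
  · rintro ⟨m, -, hm, hk⟩
    split_ifs at hm with hmr
    · exact hmr ▸ hk
    · exact hm.elim
  · exact fun hk => ⟨r, hr, by simp, hk⟩

omit [DecidableEq V] in
theorem rightUnique_keyEdge (hout : ∀ n ∈ N, ∀ a b : V, a ≠ b → ε n a ∩ ε n b = ∅) (k : K) :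
    Relator.RightUnique (keyEdge N ε k) := by
  rintro n a b ⟨hn, -, ha⟩ ⟨-, -, hb⟩
  by_contra hab
  simpa [hout n hn a b hab] using Set.mem_inter ha hb

omit [DecidableEq V] in
theorem eq_of_reflTransGen_keyEdge {k : K} {n m : V} (h : ReflTransGen (keyEdge N ε k) n m)
    (hk : k ∉ ⋃ n', ε n n') : n = m := by
  rcases ReflTransGen.cases_head_iff.1 h with hnm | ⟨c, ⟨-, -, hc⟩, -⟩
  · exact hnm
  · exact (hk (Set.mem_iUnion.2 ⟨c, hc⟩)).elim

end

/-- if for every node the edgesets of its distinct outgoing edges are pairwise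
disjoint (GS3), then the keysets of distinct nodes are pairwise disjoint (GS1). -/
theorem keysets_disjoint (N : Finset V) (r : V) (hr : r ∈ N) (ε cap : V → V → Set K)
    (hcap : IsCapK N ε cap)
    (hout : ∀ n ∈ N, ∀ a b : V, a ≠ b → ε n a ∩ ε n b = ∅) :
    ∀ n ∈ N, ∀ m ∈ N, n ≠ m →
      keysetOf N r ε cap n ∩ keysetOf N r ε cap m = ∅ := by
  intro n hn m hm hnm
  refine Set.eq_empty_of_forall_notMem fun k ⟨⟨hkn, hn_out⟩, ⟨hkm, hm_out⟩⟩ => hnm ?_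
  rw [insetOf_eq hr] at hkn hkm
  have hrn := hcap.subset_reflTransGen hr hn hkn
  have hrm := hcap.subset_reflTransGen hr hm hkm
  rcases ReflTransGen.total_of_right_unique (rightUnique_keyEdge hout k) hrn hrm with h | h
  · exact eq_of_reflTransGen_keyEdge h hn_out
  · exact (eq_of_reflTransGen_keyEdge h hm_out).symm
end

section
/- In the path-counting flow domain ℕ∞, if a finite graph G with edge labels in {0,1} has inflow in(x) = 1 for x = n₀ and 0 otherwise, and the flow satisfies flow(in, G)(n) = 1 for every node n ∈ G (i.e., every node has exactly one path from n₀), then the subgraph of G restricted to nonzero edges is a tree rooted at n₀: every node is reachable from n₀ by a unique path and the nonzero-edge graph is acyclic. -/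
/-! With `{0,1}` edge labels, the number of paths of length at most `k + 1` from `n` to `n'`
satisfies the capacity equation with the counts of paths of length at most `k` on its right-hand
side. By induction on `k`, every solution of the capacity equation dominates these counts, hence
the count of all paths; and the count of all paths is itself a solution. So the least fixpoint
`cap` is the path count, and flow `1` everywhere means exactly one path from `n₀` to each node.
Appending a nonempty cycle at `n` to that path would produce a second one. -/

variable {V : Type*} [DecidableEq V]

/-- The path-counting flow for the inflow `in(x) = 1` at `x = n₀` and `0` elsewhere:
`flow(n) = Σ_{m ∈ N} in(m) * cap(m, n)`. -/
def flowPC (N : Finset V) (n₀ : V) (cap : V → V → ℕ∞) (n : V) : ℕ∞ :=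
  ∑ m ∈ N, (if m = n₀ then 1 else 0) * cap m n

/-- The nonzero-edge relation of the graph. -/
def EdgeRel (N : Finset V) (ε : V → V → ℕ∞) (x y : V) : Prop :=
  x ∈ N ∧ y ∈ N ∧ ε x y ≠ 0

/-- A path from `n` is the list of nodes it visits after `n`. Taking `k = ⊤` gives all paths, and
since `⊤ + 1 = ⊤` the recursion over `k` then becomes the capacity equation itself. -/
def boundedPaths (N : Finset V) (ε : V → V → ℕ∞) (k : ℕ∞) (n n' : V) : Set (List V) :=
  {p | List.IsChain (EdgeRel N ε) (n :: p) ∧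
    (n :: p).getLast (List.cons_ne_nil _ _) = n' ∧ (p.length : ℕ∞) ≤ k}

section boundedPaths

omit [DecidableEq V]

variable {N : Finset V} {ε : V → V → ℕ∞} {k : ℕ∞} {n n' m : V} {q : List V}

lemma mem_boundedPaths_top :
    q ∈ boundedPaths N ε ⊤ n n' ↔
      List.IsChain (EdgeRel N ε) (n :: q) ∧ (n :: q).getLast (List.cons_ne_nil _ _) = n' := by
  simp [boundedPaths]

lemma nil_mem_boundedPaths : [] ∈ boundedPaths N ε k n n' ↔ n = n' := by
  simp [boundedPaths]

lemma cons_mem_boundedPaths :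
    m :: q ∈ boundedPaths N ε (k + 1) n n' ↔ EdgeRel N ε n m ∧ q ∈ boundedPaths N ε k m n' := by
  simp only [boundedPaths, Set.mem_ofPred_eq, List.isChain_cons_cons, List.length_cons,
    Nat.cast_add, Nat.cast_one, ENat.add_le_add_iff_right ENat.one_ne_top,
    List.getLast_cons (List.cons_ne_nil _ _), and_assoc]

lemma append_mem_boundedPaths_top {a b c : V} {p q : List V}
    (hp : p ∈ boundedPaths N ε ⊤ a b) (hq : q ∈ boundedPaths N ε ⊤ b c) :
    p ++ q ∈ boundedPaths N ε ⊤ a c := by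
  induction p generalizing a with
  | nil =>
    obtain rfl := nil_mem_boundedPaths.1 hp
    exact hq
  | cons m p ih =>
    rw [List.cons_append, ← top_add 1, cons_mem_boundedPaths] at *
    exact ⟨hp.1, ih hp.2⟩

lemma boundedPaths_zero : boundedPaths N ε 0 n n' = {p | p = [] ∧ n = n'} := by
  ext (_ | ⟨m, q⟩) <;> simp [boundedPaths]

lemma boundedPaths_add_one (hn : n ∈ N) :
    boundedPaths N ε (k + 1) n n' = {p | p = [] ∧ n = n'} ∪
      ⋃ m ∈ (N : Set V), (m :: ·) '' {q | ε n m ≠ 0 ∧ q ∈ boundedPaths N ε k m n'} := by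
  ext (_ | ⟨m, q⟩)
  · simp [nil_mem_boundedPaths]
  · simp [cons_mem_boundedPaths, EdgeRel, hn, and_comm, and_left_comm]

lemma encard_setOf_eq_nil_and (P : Prop) [Decidable P] :
    {p : List V | p = [] ∧ P}.encard = if P then 1 else 0 := by
  split_ifs with h <;> simp [h]

end boundedPaths

lemma encard_boundedPaths_add_one {N : Finset V} {ε : V → V → ℕ∞}
    (h01 : ∀ x y : V, ε x y = 0 ∨ ε x y = 1) (k : ℕ∞) {n : V} (hn : n ∈ N) (n' : V) :
    (boundedPaths N ε (k + 1) n n').encard =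
      (if n = n' then 1 else 0) + ∑ m ∈ N, ε n m * (boundedPaths N ε k m n').encard := by
  have hdisj : Disjoint {p : List V | p = [] ∧ n = n'}
      (⋃ m ∈ (N : Set V), (m :: ·) '' {q | ε n m ≠ 0 ∧ q ∈ boundedPaths N ε k m n'}) := by
    simp [Set.disjoint_left]
  have hpairwise : (N : Set V).PairwiseDisjoint
      fun m => (m :: ·) '' {q | ε n m ≠ 0 ∧ q ∈ boundedPaths N ε k m n'} := by
    intro a _ b _ hab
    rw [Function.onFun, Set.disjoint_left]
    rintro _ ⟨p, -, rfl⟩ ⟨q, -, hq⟩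
    exact hab (List.cons_eq_cons.1 hq).1.symm
  have hterm (m : V) : ((m :: ·) '' {q | ε n m ≠ 0 ∧ q ∈ boundedPaths N ε k m n'}).encard =
      ε n m * (boundedPaths N ε k m n').encard := by
    rw [List.cons_injective.encard_image]
    rcases h01 n m with h | h <;> simp [h]
  rw [boundedPaths_add_one hn, Set.encard_union_eq hdisj, encard_setOf_eq_nil_and,
    N.finite_toSet.encard_biUnion hpairwise, finsum_mem_coe_finset]
  simp only [hterm]

section CapEqN

variable {N : Finset V} {ε c : V → V → ℕ∞}

lemma capEqN_encard_boundedPaths_top (h01 : ∀ x y : V, ε x y = 0 ∨ ε x y = 1) :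
    CapEqN N ε fun n n' => (boundedPaths N ε ⊤ n n').encard := by
  intro n hn n' _
  simpa only [top_add] using encard_boundedPaths_add_one h01 ⊤ hn n'

lemma CapEqN.encard_boundedPaths_le (hc : CapEqN N ε c)
    (h01 : ∀ x y : V, ε x y = 0 ∨ ε x y = 1) (k : ℕ) {n n' : V} (hn : n ∈ N) (hn' : n' ∈ N) :
    (boundedPaths N ε k n n').encard ≤ c n n' := by
  induction k generalizing n with
  | zero =>
    rw [Nat.cast_zero, boundedPaths_zero, encard_setOf_eq_nil_and, hc n hn n' hn']
    exact le_self_add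
  | succ k ih =>
    rw [Nat.cast_succ, encard_boundedPaths_add_one h01 _ hn, hc n hn n' hn']
    gcongr with m hm
    exact ih hm

lemma CapEqN.encard_boundedPaths_top_le (hc : CapEqN N ε c)
    (h01 : ∀ x y : V, ε x y = 0 ∨ ε x y = 1) {n n' : V} (hn : n ∈ N) (hn' : n' ∈ N) :
    (boundedPaths N ε ⊤ n n').encard ≤ c n n' := by
  by_contra! hlt
  have hc_ne_top : c n n' ≠ ⊤ := hlt.ne_top
  obtain ⟨t, hts, ht⟩ := Set.exists_subset_encard_eq ((ENat.add_one_le_iff hc_ne_top).2 hlt)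
  -- `t` is a finite set of `c n n' + 1` paths, so their lengths are bounded
  have ht_fin : t.Finite := Set.encard_ne_top_iff.1 (by simpa [ht] using hc_ne_top)
  set K := ht_fin.toFinset.sup List.length
  have htK : t ⊆ boundedPaths N ε K n n' := fun p hp =>
    ⟨(hts hp).1, (hts hp).2.1, by exact_mod_cast Finset.le_sup (ht_fin.mem_toFinset.2 hp)⟩
  have := (Set.encard_le_encard htK).trans (hc.encard_boundedPaths_le h01 K hn hn')
  rw [ht, ENat.add_one_le_iff hc_ne_top] at this
  exact this.false

end CapEqN

lemma IsCapN.eq_encard_boundedPaths_top {N : Finset V} {ε cap : V → V → ℕ∞}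
    (hcap : IsCapN N ε cap) (h01 : ∀ x y : V, ε x y = 0 ∨ ε x y = 1)
    {n n' : V} (hn : n ∈ N) (hn' : n' ∈ N) :
    cap n n' = (boundedPaths N ε ⊤ n n').encard :=
  le_antisymm (hcap.2 _ (capEqN_encard_boundedPaths_top h01) n hn n' hn')
    (hcap.1.encard_boundedPaths_top_le h01 hn hn')

lemma flowPC_eq_cap {N : Finset V} {n₀ : V} (hn₀ : n₀ ∈ N) (cap : V → V → ℕ∞) (n : V) :
    flowPC N n₀ cap n = cap n₀ n := by
  simp [flowPC, hn₀]

/-- in the path-counting flow domain `ℕ∞`, if a finite graph with `{0,1}` edge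
labels has inflow `1` at `n₀` and `0` elsewhere and the flow at every node is exactly `1`,
then the nonzero-edge graph is a tree rooted at `n₀`: every node is reachable from `n₀` by a
unique path, and there are no nontrivial cycles. -/
theorem path_count_one_tree (N : Finset V) (n₀ : V) (hn₀ : n₀ ∈ N)
    (ε cap : V → V → ℕ∞)
    (hcap : IsCapN N ε cap)
    (h01 : ∀ x y : V, ε x y = 0 ∨ ε x y = 1)
    (hflow : ∀ n ∈ N, flowPC N n₀ cap n = 1) :
    (∀ n ∈ N, ∃! p : List V,
        List.Chain (EdgeRel N ε) n₀ p ∧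
        (n₀ :: p).getLast (List.cons_ne_nil _ _) = n) ∧
    (∀ n ∈ N, ∀ p : List V, p ≠ [] →
        ¬ (List.Chain (EdgeRel N ε) n p ∧
            (n :: p).getLast (List.cons_ne_nil _ _) = n)) := by
  have hunique (n : V) (hn : n ∈ N) : ∃ p, boundedPaths N ε ⊤ n₀ n = {p} := by
    rw [← Set.encard_eq_one, ← hcap.eq_encard_boundedPaths_top h01 hn₀ hn,
      ← flowPC_eq_cap hn₀ cap, hflow n hn]
  refine ⟨fun n hn => ?_, fun n hn q hq hcycle => ?_⟩
  · obtain ⟨p, hp⟩ := hunique n hn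
    refine ⟨p, mem_boundedPaths_top.1 (hp ▸ Set.mem_singleton p), fun q hq => ?_⟩
    rw [← Set.mem_singleton_iff, ← hp]
    exact mem_boundedPaths_top.2 hq
  · obtain ⟨p, hp⟩ := hunique n hn
    have hpq : p ++ q ∈ boundedPaths N ε ⊤ n₀ n :=
      append_mem_boundedPaths_top (hp ▸ Set.mem_singleton p) (mem_boundedPaths_top.2 hcycle)
    rw [hp, Set.mem_singleton_iff, List.append_right_eq_self] at hpq
    exact hq hpq
end

section
/- In the lower-bound flow domain (ℤ ∪ {−∞, ∞}, ≥, min, min, max, ∞, −∞) (where 'addition' is min and 'multiplication' is max, zero is ∞ and one is −∞), consider a finite graph that is a path n₀ → n₁ → ⋯ → n_{k−1} where each edge (nᵢ, nᵢ₊₁) is labeled with the data value kᵢ stored at nᵢ, and the inflow is −∞ at n₀ and ∞ (zero) elsewhere. If at every node nᵢ the stored value kᵢ satisfies flow(nᵢ) ≤ kᵢ (the value is at least the lower-bound flow), then the list is sorted: k₀ ≤ k₁ ≤ ⋯ ≤ k_{k−1}, and indeed flow(nᵢ) equals max of {k₀, …, k_{i−1}} (with flow(n₀) = −∞). -/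
/-- The carrier `ℤ ∪ {−∞, ∞}` of the lower-bound flow domain
`(ℤ ∪ {−∞, ∞}, ≥, min, min, max, ∞, −∞)`. -/
abbrev LBD : Type := WithBot (WithTop ℤ)

/-- The embedding of an integer data value into `ℤ ∪ {−∞, ∞}`. -/
def LBD.ofInt (z : ℤ) : LBD := ((z : WithTop ℤ) : LBD)

/-- The edge function of the path `n₀ → n₁ → ⋯ → n_{k−1}` (nodes are indices `0, …, k−1`)
in which the edge `(nᵢ, nᵢ₊₁)` is labeled with the data value `ks i` stored at `nᵢ`; absent
edges carry the semiring zero `∞ = ⊤`. -/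
def pathEdge (k : ℕ) (ks : ℕ → ℤ) (i j : ℕ) : LBD :=
  if i + 1 = j ∧ j < k then LBD.ofInt (ks i) else ⊤

/-- The capacity equation in the lower-bound flow domain, where semiring addition is `min`
(so finite sums are `Finset.inf`), multiplication is `max`, zero is `∞ = ⊤` and one is
`−∞ = ⊥`: `cap i j = δ(i,j) + Σ_{m < k} ε i m · cap m j`. -/
def CapEqLB (k : ℕ) (ε cap : ℕ → ℕ → LBD) : Prop :=
  ∀ i ∈ Finset.range k, ∀ j ∈ Finset.range k,
    cap i j = min (if i = j then (⊥ : LBD) else ⊤)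
      ((Finset.range k).inf fun m => max (ε i m) (cap m j))

/-- `cap` is the least fixpoint with respect to the flow-domain order `⊑`, which is the
reversed order `≥` on `ℤ ∪ {−∞, ∞}` (so least in `⊑` means greatest in `≤`). -/
def IsCapLB (k : ℕ) (ε cap : ℕ → ℕ → LBD) : Prop :=
  CapEqLB k ε cap ∧
    ∀ c, CapEqLB k ε c → ∀ i ∈ Finset.range k, ∀ j ∈ Finset.range k, c i j ≤ cap i j

/-- The lower-bound flow for the inflow that is `−∞ = ⊥` (the semiring one) at `n₀` and
`∞ = ⊤` (the semiring zero) elsewhere: `flow(j) = Σ_{i < k} in(i) · cap(i, j)`. -/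
def flowLB (k : ℕ) (cap : ℕ → ℕ → LBD) (j : ℕ) : LBD :=
  (Finset.range k).inf fun i => max (if i = 0 then (⊥ : LBD) else ⊤) (cap i j)

/-!
On a path, node `i` has the single successor `i + 1`, so the capacity equation expresses
`cap i j` through `cap (i + 1) j` alone; by downward induction on `i` it has exactly one
solution, `cap i j = max {ks i, …, ks (j − 1)}` for `i ≤ j` and `∞` for `i > j`.
The inflow selects row `0`, so `flow(j) = max {ks 0, …, ks (j − 1)}`, and for `i < j` the
hypothesis gives `ks i ≤ flow(j) ≤ ks j`.
-/

open Finset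

theorem Finset.inf_eq_of_forall_ne_eq_top {α β : Type*} [SemilatticeInf β] [OrderTop β]
    {s : Finset α} {f : α → β} {a : α} (ha : a ∈ s) (hf : ∀ b ∈ s, b ≠ a → f b = ⊤) :
    s.inf f = f a := by
  refine le_antisymm (Finset.inf_le ha) (Finset.le_inf fun b hb => ?_)
  rcases eq_or_ne b a with rfl | hba
  · rfl
  · simp [hf b hb hba]

theorem inf_max_pathEdge (k : ℕ) (ks : ℕ → ℤ) (c : ℕ → ℕ → LBD) (i j : ℕ) :
    ((range k).inf fun m => max (pathEdge k ks i m) (c m j)) =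
      if i + 1 < k then max (LBD.ofInt (ks i)) (c (i + 1) j) else ⊤ := by
  split_ifs with hi
  · rw [inf_eq_of_forall_ne_eq_top (mem_range.2 hi)]
    · simp [pathEdge, hi]
    · intro m _ hm
      simp [pathEdge, Ne.symm hm]
  · refine (Finset.inf_eq_top_iff _ _).2 fun m _ => ?_
    have : ¬(i + 1 = m ∧ m < k) := by omega
    simp [pathEdge, this]

def pathCap (ks : ℕ → ℤ) (i j : ℕ) : LBD :=
  if i ≤ j then (Ico i j).sup fun m => LBD.ofInt (ks m) else ⊤

theorem capEqLB_pathCap (k : ℕ) (ks : ℕ → ℤ) : CapEqLB k (pathEdge k ks) (pathCap ks) := by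
  intro i hi j hj
  rw [mem_range] at hi hj
  rw [inf_max_pathEdge]
  rcases lt_trichotomy i j with hij | rfl | hij
  · have hsucc : i + 1 < k := by omega
    rw [if_neg hij.ne, if_pos hsucc, top_inf_eq, pathCap, pathCap, if_pos hij.le,
      if_pos (show i + 1 ≤ j by omega), ← insert_Ico_add_one_left_eq_Ico hij, sup_insert]
  · simp [pathCap]
  · have hcap : pathCap ks (i + 1) j = ⊤ := if_neg (by omega)
    rw [pathCap, if_neg (not_le.2 hij), if_neg hij.ne', hcap]
    simp

theorem CapEqLB.eq_pathCap {k : ℕ} {ks : ℕ → ℤ} {cap : ℕ → ℕ → LBD}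
    (h : CapEqLB k (pathEdge k ks) cap) {i j : ℕ} (hi : i < k) (hj : j < k) :
    cap i j = pathCap ks i j := by
  rw [h i (mem_range.2 hi) j (mem_range.2 hj),
    capEqLB_pathCap k ks i (mem_range.2 hi) j (mem_range.2 hj), inf_max_pathEdge,
    inf_max_pathEdge]
  by_cases hsucc : i + 1 < k
  · rw [h.eq_pathCap hsucc hj]
  · rw [if_neg hsucc, if_neg hsucc]
termination_by k - i

theorem flowLB_eq_cap_zero {k : ℕ} (hk : 0 < k) (cap : ℕ → ℕ → LBD) (j : ℕ) :
    flowLB k cap j = cap 0 j := by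
  rw [flowLB, inf_eq_of_forall_ne_eq_top (mem_range.2 hk)]
  · simp
  · intro m _ hm
    simp [hm]

/-- for a path `n₀ → ⋯ → n_{k−1}` whose edge `(nᵢ, nᵢ₊₁)` is labeled with the
value `ks i` stored at `nᵢ`, with inflow `−∞` at `n₀` and `∞` elsewhere, if at every node the
stored value is at least the lower-bound flow (`flow(nᵢ) ≤ ks i`), then the list is sorted
(`ks i ≤ ks j` for `i ≤ j < k`) and indeed `flow(nᵢ) = max {ks 0, …, ks (i−1)}` (with
`flow(n₀) = −∞ = ⊥`). -/
theorem lower_bound_flow_sorted (k : ℕ) (ks : ℕ → ℤ) (cap : ℕ → ℕ → LBD)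
    (hcap : IsCapLB k (pathEdge k ks) cap)
    (hbound : ∀ i < k, flowLB k cap i ≤ LBD.ofInt (ks i)) :
    (∀ i j : ℕ, i ≤ j → j < k → ks i ≤ ks j) ∧
    (∀ i < k, flowLB k cap i = (Finset.range i).sup fun m => LBD.ofInt (ks m)) := by
  have hflow : ∀ i < k, flowLB k cap i = (range i).sup fun m => LBD.ofInt (ks m) := by
    intro i hi
    rw [flowLB_eq_cap_zero (by omega), hcap.1.eq_pathCap (by omega) hi, pathCap,
      if_pos i.zero_le, range_eq_Ico]
  refine ⟨fun i j hij hj => ?_, hflow⟩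
  rcases hij.eq_or_lt with rfl | hlt
  · rfl
  · have hi_le_flow : LBD.ofInt (ks i) ≤ flowLB k cap j :=
      hflow j hj ▸ le_sup (f := fun m => LBD.ofInt (ks m)) (mem_range.2 hlt)
    simpa [LBD.ofInt] using hi_le_flow.trans (hbound j hj)
end
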